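/- arXiv:2512.10247 — 2 statements merged into one kernel-verified Lean document; each statement's English description precedes it below -/
import Mathlib

section
/- Let H be a Hermitian operator with unique ground state |ψ₀⟩ of energy E₀ and spectral gap E₁ − E₀ ≥ Δ > 0. Let A be Hermitian with ‖A‖ ≤ 1, and let Â_f be the filtered operator with Gaussian filter f̂(ν) = exp(−ν²/(2σ²)). Then ‖(I − |ψ₀⟩⟨ψ₀|) Â_f |ψ₀⟩⟨ψ₀|‖ ≤ exp(−Δ²/(2σ²)). -/
open Matrix Finset

noncomputable section

/-- The rank-one operator `|ψ i⟩⟨ψ i|`. -/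
def ketbra {n : ℕ} (ψ : Fin n → Fin n → ℂ) (i : Fin n) : Matrix (Fin n) (Fin n) ℂ :=
  Matrix.vecMulVec (ψ i) (star (ψ i))

/-- The set of Bohr frequencies `{E i - E j}` of the Hamiltonian. -/
def bohrSet {n : ℕ} (E : Fin n → ℝ) : Finset ℝ :=
  Finset.image (fun p : Fin n × Fin n => E p.1 - E p.2) Finset.univ

/-- The Bohr-frequency component `A_ν = ∑_{E i - E j = ν} |ψ i⟩⟨ψ i| A |ψ j⟩⟨ψ j|`. -/
def bohrComp {n : ℕ} (ψ : Fin n → Fin n → ℂ) (E : Fin n → ℝ)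
    (A : Matrix (Fin n) (Fin n) ℂ) (ν : ℝ) : Matrix (Fin n) (Fin n) ℂ :=
  ∑ i, ∑ j, if E i - E j = ν then ketbra ψ i * A * ketbra ψ j else 0

/-- The ℓ²→ℓ² operator norm of a matrix. -/
def opNorm {n : ℕ} (M : Matrix (Fin n) (Fin n) ℂ) : ℝ :=
  ‖Matrix.toEuclideanCLM (𝕜 := ℂ) M‖

/-- The Gaussian-filtered operator `Â_f = ∑_ν e^{-ν²/2σ²} A_ν`. -/
def gaussFiltered {n : ℕ} (ψ : Fin n → Fin n → ℂ) (E : Fin n → ℝ)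
    (A : Matrix (Fin n) (Fin n) ℂ) (σ : ℝ) : Matrix (Fin n) (Fin n) ℂ :=
  ∑ ν ∈ bohrSet E, (Real.exp (-(ν ^ 2) / (2 * σ ^ 2)) : ℂ) • bohrComp ψ E A ν

/-!
Orthonormality of the `ψ i` gives `Â_f |ψ₀⟩⟨ψ₀| = (∑ i, f̂(E i - E 0) |ψ i⟩⟨ψ i|) A |ψ₀⟩⟨ψ₀|`,
and projecting off `ψ₀` leaves `D A |ψ₀⟩⟨ψ₀|` with `D = ∑ i ≠ 0, f̂(E i - E 0) |ψ i⟩⟨ψ i|`.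
By Pythagoras and Bessel's inequality a weighted sum of orthogonal rank-one projectors has norm at
most its largest weight, and the gap gives `f̂(E i - E 0) ≤ e^{-Δ²/2σ²}` for `i ≠ 0`; hence
`‖D A |ψ₀⟩⟨ψ₀|‖ ≤ ‖D‖ ‖A‖ ‖|ψ₀⟩⟨ψ₀|‖ ≤ e^{-Δ²/2σ²}`.
-/

-- For this norm instance `opNorm M` is `‖M‖` by definition.
open scoped Matrix.Norms.L2Operator InnerProductSpace

theorem Orthonormal.norm_sum_smul_inner_smul_le {𝕜 E ι : Type*} [RCLike 𝕜]
    [NormedAddCommGroup E] [InnerProductSpace 𝕜 E] {v : ι → E} (hv : Orthonormal 𝕜 v)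
    (s : Finset ι) (w : ι → 𝕜) {c : ℝ} (hc : 0 ≤ c) (hw : ∀ i ∈ s, ‖w i‖ ≤ c) (x : E) :
    ‖∑ i ∈ s, (w i * ⟪v i, x⟫_𝕜) • v i‖ ≤ c * ‖x‖ := by
  have hpyth : ‖∑ i ∈ s, (w i * ⟪v i, x⟫_𝕜) • v i‖ ^ 2
      = ∑ i ∈ s, ‖w i‖ ^ 2 * ‖⟪v i, x⟫_𝕜‖ ^ 2 := by
    rw [@norm_sq_eq_re_inner 𝕜, hv.inner_sum, map_sum]
    refine sum_congr rfl fun i _ => ?_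
    rw [RCLike.conj_mul, ← mul_pow, ← norm_mul]
    norm_cast
  refine (pow_le_pow_iff_left₀ (norm_nonneg _) (by positivity) two_ne_zero).1 ?_
  calc ‖∑ i ∈ s, (w i * ⟪v i, x⟫_𝕜) • v i‖ ^ 2
      = ∑ i ∈ s, ‖w i‖ ^ 2 * ‖⟪v i, x⟫_𝕜‖ ^ 2 := hpyth
    _ ≤ ∑ i ∈ s, c ^ 2 * ‖⟪v i, x⟫_𝕜‖ ^ 2 := by
      gcongr with i hi
      exact hw i hi
    _ ≤ c ^ 2 * ‖x‖ ^ 2 := by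
      rw [← mul_sum]
      gcongr
      exact hv.sum_inner_products_le x
    _ = (c * ‖x‖) ^ 2 := by ring

theorem orthonormal_toLp_iff {𝕜 ι m : Type*} [RCLike 𝕜] [Fintype m] [DecidableEq ι]
    (ψ : ι → m → 𝕜) :
    Orthonormal 𝕜 (fun i => WithLp.toLp 2 (ψ i) : ι → EuclideanSpace 𝕜 m) ↔
      ∀ i j, star (ψ i) ⬝ᵥ ψ j = if i = j then 1 else 0 := by
  simp only [orthonormal_iff_ite, EuclideanSpace.inner_toLp_toLp, dotProduct_comm (ψ _)]

theorem exp_neg_sq_div_le_of_le {c μ ν : ℝ} (hc : 0 ≤ c) (hμ : 0 ≤ μ) (h : μ ≤ ν) :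
    Real.exp (-ν ^ 2 / c) ≤ Real.exp (-μ ^ 2 / c) := by
  gcongr

theorem ketbra_mulVec {n : ℕ} (ψ : Fin n → Fin n → ℂ) (i : Fin n) (x : Fin n → ℂ) :
    ketbra ψ i *ᵥ x = (star (ψ i) ⬝ᵥ x) • ψ i := by
  rw [ketbra, vecMulVec_mulVec, op_smul_eq_smul]

theorem norm_sum_smul_ketbra_le {n : ℕ} {ψ : Fin n → Fin n → ℂ}
    (horth : ∀ i j, star (ψ i) ⬝ᵥ ψ j = if i = j then (1 : ℂ) else 0)
    (s : Finset (Fin n)) (w : Fin n → ℂ) {c : ℝ} (hc : 0 ≤ c) (hw : ∀ i ∈ s, ‖w i‖ ≤ c) :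
    ‖∑ i ∈ s, w i • ketbra ψ i‖ ≤ c := by
  rw [← l2_opNorm_toEuclideanCLM]
  refine ContinuousLinearMap.opNorm_le_bound _ hc fun x => ?_
  have hx : toEuclideanCLM (𝕜 := ℂ) (∑ i ∈ s, w i • ketbra ψ i) x
      = ∑ i ∈ s, (w i * ⟪WithLp.toLp 2 (ψ i), x⟫_ℂ) • WithLp.toLp 2 (ψ i) := by
    ext k
    simp [ketbra_mulVec, EuclideanSpace.inner_eq_star_dotProduct,
      dotProduct_comm, mul_assoc]
  rw [hx]
  exact ((orthonormal_toLp_iff ψ).2 horth).norm_sum_smul_inner_smul_le s w hc hw x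

theorem norm_ketbra_le_one {n : ℕ} {ψ : Fin n → Fin n → ℂ}
    (horth : ∀ i j, star (ψ i) ⬝ᵥ ψ j = if i = j then (1 : ℂ) else 0) (i : Fin n) :
    ‖ketbra ψ i‖ ≤ 1 := by
  simpa using norm_sum_smul_ketbra_le horth {i} 1 zero_le_one (by simp)

theorem ketbra_mul_ketbra {n : ℕ} {ψ : Fin n → Fin n → ℂ}
    (horth : ∀ i j, star (ψ i) ⬝ᵥ ψ j = if i = j then (1 : ℂ) else 0) (i j : Fin n) :
    ketbra ψ i * ketbra ψ j = if i = j then ketbra ψ i else 0 := by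
  rw [ketbra, ketbra, vecMulVec_mul_vecMulVec, horth]
  split_ifs with h
  · rw [h, one_smul]
  · rw [zero_smul, vecMulVec_zero]

theorem bohrComp_mul_ketbra {n : ℕ} {ψ : Fin n → Fin n → ℂ}
    (horth : ∀ i j, star (ψ i) ⬝ᵥ ψ j = if i = j then (1 : ℂ) else 0)
    (E : Fin n → ℝ) (A : Matrix (Fin n) (Fin n) ℂ) (ν : ℝ) (j : Fin n) :
    bohrComp ψ E A ν * ketbra ψ j
      = ∑ i, if E i - E j = ν then ketbra ψ i * A * ketbra ψ j else 0 := by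
  rw [bohrComp, sum_mul]
  refine sum_congr rfl fun i _ => ?_
  rw [sum_mul, sum_eq_single j]
  · rw [ite_mul, zero_mul, mul_assoc, ketbra_mul_ketbra horth, if_pos rfl]
  · intro k _ hk
    rw [ite_mul, zero_mul, mul_assoc, ketbra_mul_ketbra horth, if_neg hk, mul_zero, ite_self]
  · simp

theorem sub_mem_bohrSet {n : ℕ} (E : Fin n → ℝ) (i j : Fin n) : E i - E j ∈ bohrSet E :=
  mem_image_of_mem _ (mem_univ (i, j))

theorem gaussFiltered_mul_ketbra {n : ℕ} {ψ : Fin n → Fin n → ℂ}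
    (horth : ∀ i j, star (ψ i) ⬝ᵥ ψ j = if i = j then (1 : ℂ) else 0)
    (E : Fin n → ℝ) (A : Matrix (Fin n) (Fin n) ℂ) (σ : ℝ) (j : Fin n) :
    gaussFiltered ψ E A σ * ketbra ψ j
      = (∑ i, (Real.exp (-(E i - E j) ^ 2 / (2 * σ ^ 2)) : ℂ) • ketbra ψ i) * A * ketbra ψ j := by
  simp only [gaussFiltered, sum_mul, Matrix.smul_mul, bohrComp_mul_ketbra horth,
    smul_sum, smul_ite, smul_zero]
  rw [sum_comm]
  refine sum_congr rfl fun i _ => ?_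
  rw [sum_ite_eq, if_pos (sub_mem_bohrSet E i j)]

theorem one_sub_ketbra_mul_sum_smul_ketbra {n : ℕ} {ψ : Fin n → Fin n → ℂ}
    (horth : ∀ i j, star (ψ i) ⬝ᵥ ψ j = if i = j then (1 : ℂ) else 0)
    (w : Fin n → ℂ) (j : Fin n) :
    (1 - ketbra ψ j) * ∑ i, w i • ketbra ψ i = ∑ i ∈ univ.erase j, w i • ketbra ψ i := by
  rw [sub_mul, one_mul, mul_sum]
  simp only [mul_smul_comm, ketbra_mul_ketbra horth, smul_ite, smul_zero, sum_ite_eq,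
    mem_univ, if_true]
  rw [sum_erase_eq_sub (mem_univ j)]

theorem gauss_filtered_offdiag_small_general {d : ℕ} (ψ : Fin (d + 1) → Fin (d + 1) → ℂ)
    (E : Fin (d + 1) → ℝ) (A : Matrix (Fin (d + 1)) (Fin (d + 1)) ℂ) (Δ σ : ℝ)
    (horth : ∀ i j, star (ψ i) ⬝ᵥ ψ j = if i = j then (1 : ℂ) else 0)
    (hgap : ∀ i : Fin (d + 1), i ≠ 0 → E 0 + Δ ≤ E i)
    (hΔ : 0 < Δ) (hAnorm : opNorm A ≤ 1) :
    opNorm ((1 - ketbra ψ 0) * gaussFiltered ψ E A σ * ketbra ψ 0)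
      ≤ Real.exp (-(Δ ^ 2) / (2 * σ ^ 2)) := by
  set D := ∑ i ∈ univ.erase 0,
    (Real.exp (-(E i - E 0) ^ 2 / (2 * σ ^ 2)) : ℂ) • ketbra ψ i
  have hD : ‖D‖ ≤ Real.exp (-(Δ ^ 2) / (2 * σ ^ 2)) := by
    refine norm_sum_smul_ketbra_le horth _ _ (Real.exp_pos _).le fun i hi => ?_
    rw [Complex.norm_real, Real.norm_of_nonneg (Real.exp_pos _).le]
    exact exp_neg_sq_div_le_of_le (by positivity) hΔ.le
      (by linarith [hgap i (ne_of_mem_erase hi)])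
  have hA : ‖A‖ ≤ 1 := hAnorm
  change ‖(1 - ketbra ψ 0) * gaussFiltered ψ E A σ * ketbra ψ 0‖ ≤ _
  rw [mul_assoc, gaussFiltered_mul_ketbra horth, ← mul_assoc, ← mul_assoc,
    one_sub_ketbra_mul_sum_smul_ketbra horth]
  calc ‖D * A * ketbra ψ 0‖ ≤ ‖D‖ * ‖A‖ * ‖ketbra ψ 0‖ := norm_mul₃_le
    _ ≤ Real.exp (-(Δ ^ 2) / (2 * σ ^ 2)) * 1 * 1 := by
      gcongr
      exact norm_ketbra_le_one horth 0
    _ = Real.exp (-(Δ ^ 2) / (2 * σ ^ 2)) := by ring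

/-- the off-diagonal block of the Gaussian-filtered operator is suppressed:
`‖(I − |ψ₀⟩⟨ψ₀|) Â_f |ψ₀⟩⟨ψ₀|‖ ≤ e^{−Δ²/(2σ²)}`. -/
theorem gauss_filtered_offdiag_small {d : ℕ} (ψ : Fin (d + 1) → Fin (d + 1) → ℂ)
    (E : Fin (d + 1) → ℝ) (H A : Matrix (Fin (d + 1)) (Fin (d + 1)) ℂ) (Δ σ : ℝ)
    (horth : ∀ i j, star (ψ i) ⬝ᵥ ψ j = if i = j then (1 : ℂ) else 0)
    (hcomplete : ∑ i, ketbra ψ i = 1)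
    (hH : H = ∑ i, (E i : ℂ) • ketbra ψ i)
    (hgap : ∀ i : Fin (d + 1), i ≠ 0 → E 0 + Δ ≤ E i)
    (hΔ : 0 < Δ) (hσ : 0 < σ)
    (hA : A.IsHermitian) (hAnorm : opNorm A ≤ 1) :
    opNorm ((1 - ketbra ψ 0) * gaussFiltered ψ E A σ * ketbra ψ 0)
      ≤ Real.exp (-(Δ ^ 2) / (2 * σ ^ 2)) :=
  gauss_filtered_offdiag_small_general ψ E A Δ σ horth hgap hΔ hAnorm
end
end

section
/- Let H have a unique ground state |ψ₀⟩ with spectral gap ≥ Δ, and let f be a filter whose Fourier transform satisfies f̂(ν) = 0 for |ν| ≥ Δ and f̂(0) = 1. Then the filtered operator Â_f is exactly block-diagonal: Â_f = ⟨ψ₀|A|ψ₀⟩ · |ψ₀⟩⟨ψ₀| + A⊥ for some operator A⊥ with A⊥|ψ₀⟩ = 0 and ⟨ψ₀|A⊥ = 0. -/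
open Matrix Finset

noncomputable section

/-- The filtered operator `Â_f = ∑_ν f̂(−ν) A_ν`, specified via the Fourier transform `f̂`. -/
def sumFiltered {n : ℕ} (ψ : Fin n → Fin n → ℂ) (E : Fin n → ℝ)
    (A : Matrix (Fin n) (Fin n) ℂ) (fhat : ℝ → ℂ) : Matrix (Fin n) (Fin n) ℂ :=
  ∑ ν ∈ bohrSet E, fhat (-ν) • bohrComp ψ E A ν

/-!
Expand `Â_f` in the eigenbasis as `∑ i j, f̂(E j - E i) |ψ i⟩⟨ψ i|A|ψ j⟩⟨ψ j|`. Applied to `|ψ₀⟩`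
only the terms with `j = 0` survive, weighted by `f̂(E₀ - E i)`; the gap puts `E₀ - E i` outside
the support of `f̂` unless `i = 0`, so `Â_f |ψ₀⟩ = ⟨ψ₀|A|ψ₀⟩ |ψ₀⟩`, and symmetrically for `⟨ψ₀| Â_f`.
An operator having `|ψ₀⟩` as a right and `⟨ψ₀|` as a left eigenvector with the same eigenvalue
splits off that eigenvalue times `|ψ₀⟩⟨ψ₀|`.
-/

theorem Matrix.exists_eq_smul_vecMulVec_add {m α : Type*} [Fintype m] [CommRing α]
    (S : Matrix m m α) (u w : m → α) (c : α) (hwu : w ⬝ᵥ u = 1)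
    (hright : S *ᵥ u = c • u) (hleft : w ᵥ* S = c • w) :
    ∃ R : Matrix m m α, R *ᵥ u = 0 ∧ w ᵥ* R = 0 ∧ S = c • vecMulVec u w + R := by
  refine ⟨S - c • vecMulVec u w, ?_, ?_, (add_sub_cancel _ _).symm⟩
  · rw [sub_mulVec, hright, smul_mulVec, vecMulVec_mulVec, hwu, MulOpposite.op_one, one_smul,
      sub_self]
  · rw [vecMul_sub, hleft, vecMul_smul, vecMul_vecMulVec, hwu, one_smul, sub_self]

section

variable {n : ℕ} {ψ : Fin n → Fin n → ℂ}

theorem sumFiltered_eq_sum_sum (ψ : Fin n → Fin n → ℂ) (E : Fin n → ℝ)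
    (A : Matrix (Fin n) (Fin n) ℂ) (fhat : ℝ → ℂ) :
    sumFiltered ψ E A fhat = ∑ i, ∑ j, fhat (E j - E i) • (ketbra ψ i * A * ketbra ψ j) := by
  unfold sumFiltered bohrComp
  simp only [smul_sum]
  rw [sum_comm]
  refine sum_congr rfl fun i _ => ?_
  rw [sum_comm]
  refine sum_congr rfl fun j _ => ?_
  rw [sum_eq_single (E i - E j), if_pos rfl, neg_sub]
  · exact fun ν _ hν => by rw [if_neg (Ne.symm hν), smul_zero]
  · exact fun h => absurd (mem_image_of_mem _ (mem_univ (i, j))) h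

variable (horth : ∀ i j, star (ψ i) ⬝ᵥ ψ j = if i = j then (1 : ℂ) else 0)
include horth

theorem ketbra_mulVec_of_orthonormal (i k : Fin n) :
    ketbra ψ i *ᵥ ψ k = if i = k then ψ i else 0 := by
  rw [ketbra, vecMulVec_mulVec, horth]
  split_ifs <;> simp

theorem vecMul_ketbra_of_orthonormal (k i : Fin n) :
    star (ψ k) ᵥ* ketbra ψ i = if k = i then star (ψ i) else 0 := by
  rw [ketbra, vecMul_vecMulVec, horth]
  split_ifs <;> simp

theorem sumFiltered_mulVec (E : Fin n → ℝ) (A : Matrix (Fin n) (Fin n) ℂ) (fhat : ℝ → ℂ)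
    (k : Fin n) :
    sumFiltered ψ E A fhat *ᵥ ψ k
      = ∑ i, fhat (E k - E i) • (star (ψ i) ⬝ᵥ A *ᵥ ψ k) • ψ i := by
  rw [sumFiltered_eq_sum_sum, sum_mulVec]
  refine sum_congr rfl fun i _ => ?_
  rw [sum_mulVec, sum_eq_single k]
  · rw [smul_mulVec, ← mulVec_mulVec, ketbra_mulVec_of_orthonormal horth, if_pos rfl,
      ← mulVec_mulVec, ketbra, vecMulVec_mulVec, op_smul_eq_smul]
  · intro j _ hj
    rw [smul_mulVec, ← mulVec_mulVec, ketbra_mulVec_of_orthonormal horth, if_neg hj,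
      mulVec_zero, smul_zero]
  · exact fun h => absurd (mem_univ k) h

theorem vecMul_sumFiltered (E : Fin n → ℝ) (A : Matrix (Fin n) (Fin n) ℂ) (fhat : ℝ → ℂ)
    (k : Fin n) :
    star (ψ k) ᵥ* sumFiltered ψ E A fhat
      = ∑ j, fhat (E j - E k) • (star (ψ k) ⬝ᵥ A *ᵥ ψ j) • star (ψ j) := by
  rw [sumFiltered_eq_sum_sum, vecMul_sum, sum_eq_single k, vecMul_sum]
  · refine sum_congr rfl fun j _ => ?_
    rw [vecMul_smul, ← vecMul_vecMul, ← vecMul_vecMul, vecMul_ketbra_of_orthonormal horth,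
      if_pos rfl, ketbra, vecMul_vecMulVec, dotProduct_mulVec]
  · intro i _ hi
    rw [vecMul_sum]
    refine sum_eq_zero fun j _ => ?_
    rw [vecMul_smul, ← vecMul_vecMul, ← vecMul_vecMul, vecMul_ketbra_of_orthonormal horth,
      if_neg (Ne.symm hi), zero_vecMul, zero_vecMul, smul_zero]
  · exact fun h => absurd (mem_univ k) h

variable {E : Fin n → ℝ} {fhat : ℝ → ℂ} (hf0 : fhat 0 = 1)
include hf0

theorem sumFiltered_mulVec_of_isolated (A : Matrix (Fin n) (Fin n) ℂ) {k : Fin n}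
    (hiso : ∀ i ≠ k, fhat (E k - E i) = 0) :
    sumFiltered ψ E A fhat *ᵥ ψ k = (star (ψ k) ⬝ᵥ A *ᵥ ψ k) • ψ k := by
  rw [sumFiltered_mulVec horth, sum_eq_single k, sub_self, hf0, one_smul]
  · exact fun i _ hi => by rw [hiso i hi, zero_smul]
  · exact fun h => absurd (mem_univ k) h

theorem vecMul_sumFiltered_of_isolated (A : Matrix (Fin n) (Fin n) ℂ) {k : Fin n}
    (hiso : ∀ j ≠ k, fhat (E j - E k) = 0) :
    star (ψ k) ᵥ* sumFiltered ψ E A fhat = (star (ψ k) ⬝ᵥ A *ᵥ ψ k) • star (ψ k) := by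
  rw [vecMul_sumFiltered horth, sum_eq_single k, sub_self, hf0, one_smul]
  · exact fun j _ hj => by rw [hiso j hj, zero_smul]
  · exact fun h => absurd (mem_univ k) h

end

theorem exact_filter_block_diagonal_general {d : ℕ} (ψ : Fin (d + 1) → Fin (d + 1) → ℂ)
    (E : Fin (d + 1) → ℝ) (A : Matrix (Fin (d + 1)) (Fin (d + 1)) ℂ) (Δ : ℝ)
    (fhat : ℝ → ℂ)
    (horth : ∀ i j, star (ψ i) ⬝ᵥ ψ j = if i = j then (1 : ℂ) else 0)
    (hgap : ∀ i : Fin (d + 1), i ≠ 0 → E 0 + Δ ≤ E i)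
    (hfsupp : ∀ ν : ℝ, Δ ≤ |ν| → fhat ν = 0)
    (hf0 : fhat 0 = 1) :
    ∃ Aperp : Matrix (Fin (d + 1)) (Fin (d + 1)) ℂ,
      Aperp.mulVec (ψ 0) = 0 ∧
      Matrix.vecMul (star (ψ 0)) Aperp = 0 ∧
      sumFiltered ψ E A fhat
        = (star (ψ 0) ⬝ᵥ A.mulVec (ψ 0)) • ketbra ψ 0 + Aperp := by
  have hsep : ∀ i ≠ 0, Δ ≤ |E i - E 0| := fun i hi =>
    (le_sub_iff_add_le'.mpr (hgap i hi)).trans (le_abs_self _)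
  have hup : ∀ i ≠ 0, fhat (E i - E 0) = 0 := fun i hi => hfsupp _ (hsep i hi)
  have hdown : ∀ i ≠ 0, fhat (E 0 - E i) = 0 := fun i hi =>
    hfsupp _ ((hsep i hi).trans_eq (abs_sub_comm _ _))
  have hnorm : star (ψ 0) ⬝ᵥ ψ 0 = 1 := by rw [horth, if_pos rfl]
  exact exists_eq_smul_vecMulVec_add _ _ _ _ hnorm
    (sumFiltered_mulVec_of_isolated horth hf0 A hdown)
    (vecMul_sumFiltered_of_isolated horth hf0 A hup)

/-- with a filter supported in `(−Δ, Δ)` with `f̂(0) = 1`, the filtered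
operator is exactly block-diagonal:
`Â_f = ⟨ψ₀|A|ψ₀⟩·|ψ₀⟩⟨ψ₀| + A⊥` with `A⊥|ψ₀⟩ = 0` and `⟨ψ₀|A⊥ = 0`. -/
theorem exact_filter_block_diagonal {d : ℕ} (ψ : Fin (d + 1) → Fin (d + 1) → ℂ)
    (E : Fin (d + 1) → ℝ) (H A : Matrix (Fin (d + 1)) (Fin (d + 1)) ℂ) (Δ : ℝ)
    (fhat : ℝ → ℂ)
    (horth : ∀ i j, star (ψ i) ⬝ᵥ ψ j = if i = j then (1 : ℂ) else 0)
    (hcomplete : ∑ i, ketbra ψ i = 1)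
    (hH : H = ∑ i, (E i : ℂ) • ketbra ψ i)
    (hgap : ∀ i : Fin (d + 1), i ≠ 0 → E 0 + Δ ≤ E i)
    (hΔ : 0 < Δ)
    (hA : A.IsHermitian)
    (hfsupp : ∀ ν : ℝ, Δ ≤ |ν| → fhat ν = 0)
    (hf0 : fhat 0 = 1) :
    ∃ Aperp : Matrix (Fin (d + 1)) (Fin (d + 1)) ℂ,
      Aperp.mulVec (ψ 0) = 0 ∧
      Matrix.vecMul (star (ψ 0)) Aperp = 0 ∧
      sumFiltered ψ E A fhat
        = (star (ψ 0) ⬝ᵥ A.mulVec (ψ 0)) • ketbra ψ 0 + Aperp :=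
  exact_filter_block_diagonal_general ψ E A Δ fhat horth hgap hfsupp hf0

end
end
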